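/- arXiv:2410.03671 — 3 statements merged into one kernel-verified Lean document; each statement's English description precedes it below -/
import Mathlib

section
/- Let a, b ∈ ℝ and 0 < q ≤ ∞, and let f = (f_j)_{j∈ℕ} be a nonnegative sequence. Define the K-functional of the weighted spaces K(t, f, ℓ^{a,q}, ℓ^{b,q}) = inf_{0 ≤ g_j ≤ f_j} (Σ_j 2^{jaq} g_j^q)^{1/q} + t (Σ_j 2^{jbq} (f_j − g_j)^q)^{1/q}, and the vertex K-functional K_V(t, f) = inf over subsets S ⊆ ℕ of (Σ_{j∈S} 2^{jaq} f_j^q)^{1/q} + t (Σ_{j∉S} 2^{jbq} f_j^q)^{1/q}. Then K(t, f, ℓ^{a,q}, ℓ^{b,q}) and K_V(t, f) are equivalent: K ≤ K_V ≤ 2 K (up to a constant depending only on q). -/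
open Set ENNReal

/-- The weighted `ℓ^{a,q}` quasi-norm on sequences over `ℕ`:
`(Σ_j (2^{ja} f_j)^q)^{1/q}`, with the supremum when `q = ∞`. -/
noncomputable def wnorm (a : ℝ) (q : ℝ≥0∞) (f : ℕ → ℝ) : ℝ :=
  if q = ∞ then ⨆ j : ℕ, (2:ℝ) ^ ((j:ℝ) * a) * f j
  else (∑' j : ℕ, ((2:ℝ) ^ ((j:ℝ) * a) * f j) ^ q.toReal) ^ (1 / q.toReal)

/-- K-functional of the weighted couple `(ℓ^{a,q}, ℓ^{b,q})`, over decompositions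
`f = g + (f - g)` with `0 ≤ g ≤ f`. -/
noncomputable def Kw (a b : ℝ) (q : ℝ≥0∞) (t : ℝ) (f : ℕ → ℝ) : ℝ :=
  sInf {r : ℝ | ∃ g : ℕ → ℝ, (∀ j, 0 ≤ g j ∧ g j ≤ f j) ∧
    r = wnorm a q g + t * wnorm b q (fun j => f j - g j)}

/-- Vertex K-functional: the competitor is an indicator restriction of `f` to a
subset `S ⊆ ℕ`. -/
noncomputable def KV (a b : ℝ) (q : ℝ≥0∞) (t : ℝ) (f : ℕ → ℝ) : ℝ :=
  sInf {r : ℝ | ∃ S : Set ℕ,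
    r = wnorm a q (S.indicator f) + t * wnorm b q (Sᶜ.indicator f)}

private lemma wpos (a : ℝ) (j : ℕ) : (0:ℝ) < (2:ℝ) ^ ((j:ℝ) * a) :=
  Real.rpow_pos_of_pos two_pos _

private lemma wnorm_nonneg' (a : ℝ) (q : ℝ≥0∞) {f : ℕ → ℝ} (hf : ∀ j, 0 ≤ f j) :
    0 ≤ wnorm a q f := by
  unfold wnorm
  split
  · exact Real.iSup_nonneg fun j => mul_nonneg (wpos a j).le (hf j)
  · exact Real.rpow_nonneg
      (tsum_nonneg fun j => Real.rpow_nonneg (mul_nonneg (wpos a j).le (hf j)) _) _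

private lemma wnorm_zero' (a : ℝ) {q : ℝ≥0∞} (hq : 0 < q) :
    wnorm a q (fun _ : ℕ => (0:ℝ)) = 0 := by
  by_cases h : q = ∞
  · unfold wnorm
    rw [if_pos h]
    simp [ciSup_const]
  · have hp : 0 < q.toReal := ENNReal.toReal_pos hq.ne' h
    unfold wnorm
    rw [if_neg h]
    simp [Real.zero_rpow hp.ne', Real.zero_rpow (inv_ne_zero hp.ne')]

private lemma wnorm_of_not_summable (a : ℝ) {q : ℝ≥0∞} (hq : q ≠ ∞) (hp : 0 < q.toReal)
    {f : ℕ → ℝ}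
    (h : ¬ Summable fun j : ℕ => ((2:ℝ)^((j:ℝ)*a) * f j) ^ q.toReal) : wnorm a q f = 0 := by
  unfold wnorm
  rw [if_neg hq, tsum_eq_zero_of_not_summable h, Real.zero_rpow (one_div_ne_zero hp.ne')]

private lemma wnorm_of_not_bdd (a : ℝ) {f : ℕ → ℝ}
    (h : ¬ BddAbove (Set.range fun j : ℕ => (2:ℝ)^((j:ℝ)*a) * f j)) : wnorm a ⊤ f = 0 := by
  unfold wnorm
  rw [if_pos rfl, Real.iSup_of_not_bddAbove h]

private lemma bdd_mono {u v : ℕ → ℝ} (huv : ∀ j, u j ≤ v j)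
    (h : BddAbove (Set.range v)) : BddAbove (Set.range u) := by
  obtain ⟨M, hM⟩ := h
  exact ⟨M, by rintro x ⟨j, rfl⟩; exact (huv j).trans (hM ⟨j, rfl⟩)⟩

/-- Main comparison, `q = ∞` case. -/
private lemma aux_inf (a : ℝ) {u v : ℕ → ℝ} (_hu : ∀ j, 0 ≤ u j)
    (huv : ∀ j, u j ≤ 2 * v j)
    (hbdd : BddAbove (Set.range fun j : ℕ => (2:ℝ)^((j:ℝ)*a) * v j)) :
    wnorm a ⊤ u ≤ 2 * wnorm a ⊤ v := by
  unfold wnorm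
  rw [if_pos rfl, if_pos rfl]
  refine ciSup_le fun j => ?_
  calc (2:ℝ)^((j:ℝ)*a) * u j ≤ (2:ℝ)^((j:ℝ)*a) * (2 * v j) :=
        mul_le_mul_of_nonneg_left (huv j) (wpos a j).le
    _ = 2 * ((2:ℝ)^((j:ℝ)*a) * v j) := by ring
    _ ≤ 2 * ⨆ i : ℕ, (2:ℝ)^((i:ℝ)*a) * v i :=
        mul_le_mul_of_nonneg_left (le_ciSup hbdd j) (by norm_num)

/-- Main comparison, `q < ∞` case. -/
private lemma aux_fin (a : ℝ) {q : ℝ≥0∞} (hq : q ≠ ∞) (hp : 0 < q.toReal)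
    {u v : ℕ → ℝ} (hu : ∀ j, 0 ≤ u j) (hv : ∀ j, 0 ≤ v j)
    (huv : ∀ j, u j ≤ 2 * v j)
    (hsum : Summable fun j : ℕ => ((2:ℝ)^((j:ℝ)*a) * v j) ^ q.toReal) :
    wnorm a q u ≤ 2 * wnorm a q v := by
  set p := q.toReal
  unfold wnorm
  rw [if_neg hq, if_neg hq]
  have hterm : ∀ j : ℕ, ((2:ℝ)^((j:ℝ)*a) * u j) ^ p
      ≤ 2 ^ p * ((2:ℝ)^((j:ℝ)*a) * v j) ^ p := by
    intro j
    have h1 : (2:ℝ)^((j:ℝ)*a) * u j ≤ 2 * ((2:ℝ)^((j:ℝ)*a) * v j) := by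
      calc (2:ℝ)^((j:ℝ)*a) * u j ≤ (2:ℝ)^((j:ℝ)*a) * (2 * v j) :=
            mul_le_mul_of_nonneg_left (huv j) (wpos a j).le
        _ = 2 * ((2:ℝ)^((j:ℝ)*a) * v j) := by ring
    calc ((2:ℝ)^((j:ℝ)*a) * u j) ^ p ≤ (2 * ((2:ℝ)^((j:ℝ)*a) * v j)) ^ p :=
          Real.rpow_le_rpow (mul_nonneg (wpos a j).le (hu j)) h1 hp.le
      _ = 2 ^ p * ((2:ℝ)^((j:ℝ)*a) * v j) ^ p := by
          rw [Real.mul_rpow (by norm_num) (mul_nonneg (wpos a j).le (hv j))]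
  have hsum2 : Summable fun j : ℕ => 2 ^ p * ((2:ℝ)^((j:ℝ)*a) * v j) ^ p :=
    hsum.mul_left _
  have hsumu : Summable fun j : ℕ => ((2:ℝ)^((j:ℝ)*a) * u j) ^ p :=
    Summable.of_nonneg_of_le
      (fun j => Real.rpow_nonneg (mul_nonneg (wpos a j).le (hu j)) _) hterm hsum2
  have htsum : (∑' j : ℕ, ((2:ℝ)^((j:ℝ)*a) * u j) ^ p)
      ≤ 2 ^ p * ∑' j : ℕ, ((2:ℝ)^((j:ℝ)*a) * v j) ^ p := by
    rw [← tsum_mul_left]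
    exact Summable.tsum_le_tsum hterm hsumu hsum2
  have h0u : 0 ≤ ∑' j : ℕ, ((2:ℝ)^((j:ℝ)*a) * u j) ^ p :=
    tsum_nonneg fun j => Real.rpow_nonneg (mul_nonneg (wpos a j).le (hu j)) _
  have h0v : 0 ≤ ∑' j : ℕ, ((2:ℝ)^((j:ℝ)*a) * v j) ^ p :=
    tsum_nonneg fun j => Real.rpow_nonneg (mul_nonneg (wpos a j).le (hv j)) _
  calc (∑' j : ℕ, ((2:ℝ)^((j:ℝ)*a) * u j) ^ p) ^ (1/p)
      ≤ (2 ^ p * ∑' j : ℕ, ((2:ℝ)^((j:ℝ)*a) * v j) ^ p) ^ (1/p) :=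
        Real.rpow_le_rpow h0u htsum (by positivity)
    _ = ((2:ℝ) ^ p) ^ (1/p) * (∑' j : ℕ, ((2:ℝ)^((j:ℝ)*a) * v j) ^ p) ^ (1/p) :=
        Real.mul_rpow (by positivity) h0v
    _ = 2 * (∑' j : ℕ, ((2:ℝ)^((j:ℝ)*a) * v j) ^ p) ^ (1/p) := by
        rw [← Real.rpow_mul (by norm_num : (0:ℝ) ≤ 2), mul_one_div, div_self hp.ne',
          Real.rpow_one]

/-- The K-functional of `(ℓ^{a,q}, ℓ^{b,q})` and its vertex version are equivalent:
`K ≤ K_V ≤ C·K` with a constant depending only on `q`. -/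
theorem stmt10 (a b : ℝ) (q : ℝ≥0∞) (hq : 0 < q) :
    ∃ C : ℝ, 0 < C ∧ ∀ f : ℕ → ℝ, (∀ j, 0 ≤ f j) → ∀ t : ℝ, 0 < t →
      Kw a b q t f ≤ KV a b q t f ∧ KV a b q t f ≤ C * Kw a b q t f := by
  refine ⟨2, by norm_num, fun f hf t ht => ?_⟩
  set A := {r : ℝ | ∃ g : ℕ → ℝ, (∀ j, 0 ≤ g j ∧ g j ≤ f j) ∧
    r = wnorm a q g + t * wnorm b q (fun j => f j - g j)} with hAdef
  set B := {r : ℝ | ∃ S : Set ℕ,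
    r = wnorm a q (S.indicator f) + t * wnorm b q (Sᶜ.indicator f)} with hBdef
  have hKw : Kw a b q t f = sInf A := rfl
  have hKV : KV a b q t f = sInf B := rfl
  have hAlb : ∀ r ∈ A, (0:ℝ) ≤ r := by
    rintro r ⟨g, hg, rfl⟩
    exact add_nonneg (wnorm_nonneg' a q fun j => (hg j).1)
      (mul_nonneg ht.le (wnorm_nonneg' b q fun j => sub_nonneg.2 (hg j).2))
  have hBlb : ∀ r ∈ B, (0:ℝ) ≤ r := by
    rintro r ⟨S, rfl⟩
    exact add_nonneg (wnorm_nonneg' a q fun j => Set.indicator_nonneg (fun i _ => hf i) j)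
      (mul_nonneg ht.le (wnorm_nonneg' b q fun j => Set.indicator_nonneg (fun i _ => hf i) j))
  have hAne : A.Nonempty := ⟨_, f, fun j => ⟨hf j, le_refl _⟩, rfl⟩
  have hBne : B.Nonempty := ⟨_, (∅ : Set ℕ), rfl⟩
  have hAbdd : BddBelow A := ⟨0, hAlb⟩
  have hBbdd : BddBelow B := ⟨0, hBlb⟩
  have hBA : B ⊆ A := by
    rintro r ⟨S, rfl⟩
    refine ⟨S.indicator f, fun j =>
      ⟨Set.indicator_nonneg (fun i _ => hf i) j, Set.indicator_le_self' (fun i _ => hf i) j⟩, ?_⟩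
    have : (fun j => f j - S.indicator f j) = Sᶜ.indicator f := by
      funext j
      by_cases h : j ∈ S <;> simp [Set.indicator, h]
    rw [this]
  constructor
  · rw [hKw, hKV]
    exact csInf_le_csInf hAbdd hBne hBA
  · -- KV ≤ 2 * Kw
    have key : ∀ r ∈ A, sInf B ≤ 2 * r := by
      rintro r ⟨g, hg, rfl⟩
      have hrnn : (0:ℝ) ≤ wnorm a q g + t * wnorm b q (fun j => f j - g j) :=
        hAlb _ ⟨g, hg, rfl⟩
      by_cases hqt : q = ∞
      · subst hqt
        by_cases h1 : BddAbove (Set.range fun j : ℕ => (2:ℝ)^((j:ℝ)*a) * f j)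
        · by_cases h2 : BddAbove (Set.range fun j : ℕ => (2:ℝ)^((j:ℝ)*b) * f j)
          · -- good case
            set S : Set ℕ := {j | f j ≤ 2 * g j} with hS
            have hmem : (wnorm a ⊤ (S.indicator f) + t * wnorm b ⊤ (Sᶜ.indicator f)) ∈ B :=
              ⟨S, rfl⟩
            refine le_trans (csInf_le hBbdd hmem) ?_
            have hbg : BddAbove (Set.range fun j : ℕ => (2:ℝ)^((j:ℝ)*a) * g j) :=
              bdd_mono (fun j => mul_le_mul_of_nonneg_left (hg j).2 (wpos a j).le) h1
            have hbfg : BddAbove (Set.range fun j : ℕ => (2:ℝ)^((j:ℝ)*b) * (f j - g j)) :=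
              bdd_mono (fun j => mul_le_mul_of_nonneg_left
                (by linarith [(hg j).1]) (wpos b j).le) h2
            have e1 : wnorm a ⊤ (S.indicator f) ≤ 2 * wnorm a ⊤ g := by
              refine aux_inf a (fun j => Set.indicator_nonneg (fun i _ => hf i) j) ?_ hbg
              intro j
              by_cases h : j ∈ S
              · rw [Set.indicator_of_mem h]; exact h
              · rw [Set.indicator_of_notMem h]
                have := (hg j).1; linarith
            have e2 : wnorm b ⊤ (Sᶜ.indicator f) ≤ 2 * wnorm b ⊤ (fun j => f j - g j) := by
              refine aux_inf b (fun j => Set.indicator_nonneg (fun i _ => hf i) j) ?_ hbfg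
              intro j
              by_cases h : j ∈ S
              · rw [Set.indicator_of_notMem (by simpa using h)]
                have := (hg j).2; linarith
              · rw [Set.indicator_of_mem (by simpa using h)]
                have : ¬ f j ≤ 2 * g j := h
                linarith
            nlinarith [ht.le, wnorm_nonneg' b ⊤ (fun j => sub_nonneg.2 (hg j).2)]
          · -- f unbounded in b-norm: take S = ∅
            have hmem : (wnorm a ⊤ ((∅ : Set ℕ).indicator f)
                + t * wnorm b ⊤ ((∅ : Set ℕ)ᶜ.indicator f)) ∈ B := ⟨∅, rfl⟩
            refine le_trans (csInf_le hBbdd hmem) ?_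
            rw [Set.indicator_empty, Set.compl_empty, Set.indicator_univ,
              wnorm_zero' a hq, wnorm_of_not_bdd b h2]
            nlinarith
        · -- f unbounded in a-norm: take S = univ
          have hmem : (wnorm a ⊤ ((Set.univ : Set ℕ).indicator f)
              + t * wnorm b ⊤ ((Set.univ : Set ℕ)ᶜ.indicator f)) ∈ B := ⟨Set.univ, rfl⟩
          refine le_trans (csInf_le hBbdd hmem) ?_
          rw [Set.indicator_univ, Set.compl_univ, Set.indicator_empty,
            wnorm_zero' b hq, wnorm_of_not_bdd a h1]
          nlinarith
      · -- q < ∞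
        have hp : 0 < q.toReal := ENNReal.toReal_pos hq.ne' hqt
        by_cases h1 : Summable fun j : ℕ => ((2:ℝ)^((j:ℝ)*a) * f j) ^ q.toReal
        · by_cases h2 : Summable fun j : ℕ => ((2:ℝ)^((j:ℝ)*b) * f j) ^ q.toReal
          · set S : Set ℕ := {j | f j ≤ 2 * g j} with hS
            have hmem : (wnorm a q (S.indicator f) + t * wnorm b q (Sᶜ.indicator f)) ∈ B :=
              ⟨S, rfl⟩
            refine le_trans (csInf_le hBbdd hmem) ?_
            have hsg : Summable fun j : ℕ => ((2:ℝ)^((j:ℝ)*a) * g j) ^ q.toReal := by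
              refine Summable.of_nonneg_of_le
                (fun j => Real.rpow_nonneg (mul_nonneg (wpos a j).le (hg j).1) _)
                (fun j => Real.rpow_le_rpow (mul_nonneg (wpos a j).le (hg j).1)
                  (mul_le_mul_of_nonneg_left (hg j).2 (wpos a j).le) hp.le) h1
            have hsfg : Summable fun j : ℕ => ((2:ℝ)^((j:ℝ)*b) * (f j - g j)) ^ q.toReal := by
              refine Summable.of_nonneg_of_le
                (fun j => Real.rpow_nonneg
                  (mul_nonneg (wpos b j).le (sub_nonneg.2 (hg j).2)) _)
                (fun j => Real.rpow_le_rpow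
                  (mul_nonneg (wpos b j).le (sub_nonneg.2 (hg j).2))
                  (mul_le_mul_of_nonneg_left (by linarith [(hg j).1]) (wpos b j).le) hp.le) h2
            have e1 : wnorm a q (S.indicator f) ≤ 2 * wnorm a q g := by
              refine aux_fin a hqt hp (fun j => Set.indicator_nonneg (fun i _ => hf i) j)
                (fun j => (hg j).1) ?_ hsg
              intro j
              by_cases h : j ∈ S
              · rw [Set.indicator_of_mem h]; exact h
              · rw [Set.indicator_of_notMem h]
                have := (hg j).1; linarith
            have e2 : wnorm b q (Sᶜ.indicator f) ≤ 2 * wnorm b q (fun j => f j - g j) := by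
              refine aux_fin b hqt hp (fun j => Set.indicator_nonneg (fun i _ => hf i) j)
                (fun j => sub_nonneg.2 (hg j).2) ?_ hsfg
              intro j
              by_cases h : j ∈ S
              · rw [Set.indicator_of_notMem (by simpa using h)]
                have := (hg j).2; linarith
              · rw [Set.indicator_of_mem (by simpa using h)]
                have : ¬ f j ≤ 2 * g j := h
                linarith
            nlinarith [ht.le, wnorm_nonneg' b q (fun j => sub_nonneg.2 (hg j).2)]
          · have hmem : (wnorm a q ((∅ : Set ℕ).indicator f)
                + t * wnorm b q ((∅ : Set ℕ)ᶜ.indicator f)) ∈ B := ⟨∅, rfl⟩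
            refine le_trans (csInf_le hBbdd hmem) ?_
            rw [Set.indicator_empty, Set.compl_empty, Set.indicator_univ,
              wnorm_zero' a hq, wnorm_of_not_summable b hqt hp h2]
            nlinarith
        · have hmem : (wnorm a q ((Set.univ : Set ℕ).indicator f)
              + t * wnorm b q ((Set.univ : Set ℕ)ᶜ.indicator f)) ∈ B := ⟨Set.univ, rfl⟩
          refine le_trans (csInf_le hBbdd hmem) ?_
          rw [Set.indicator_univ, Set.compl_univ, Set.indicator_empty,
            wnorm_zero' b hq, wnorm_of_not_summable a hqt hp h1]
          nlinarith
    rw [hKw, hKV]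
    have : sInf B / 2 ≤ sInf A := le_csInf hAne fun r hr => by linarith [key r hr]
    linarith
end

section
/- Let X₀, X₁ be quasi-normed sequence spaces over countable index set Λ with monotone quasi-norms, 0 < ξ < ∞, and f a nonnegative sequence. Define the cuboid functional K_ξ^{𝔠}(t, f) = inf over 0 ≤ g ≤ f pointwise of (‖g‖_{X₀}^ξ + t^ξ‖f − g‖_{X₁}^ξ)^{1/ξ}, and the vertex functional K_ξ^V(t, f) = infimum over g with each g_λ ∈ {0, f_λ}. Then K_ξ^{𝔠}(t, f) ≤ K_ξ^V(t, f) ≤ 2 K_ξ^{𝔠}(t, f). -/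
open Set

/-- Cuboid `K_ξ` functional: infimum over competitors `0 ≤ g ≤ f` pointwise. -/
noncomputable def Kcub {Λ : Type*} (N₀ N₁ : (Λ → ℝ) → ℝ) (ξ t : ℝ) (f : Λ → ℝ) : ℝ :=
  sInf {r : ℝ | ∃ g : Λ → ℝ, (∀ l, 0 ≤ g l ∧ g l ≤ f l) ∧
    r = (N₀ g ^ ξ + t ^ ξ * N₁ (fun l => f l - g l) ^ ξ) ^ (1 / ξ)}

/-- Vertex `K_ξ` functional: infimum over competitors with `g_λ ∈ {0, f_λ}`. -/
noncomputable def Kvert {Λ : Type*} (N₀ N₁ : (Λ → ℝ) → ℝ) (ξ t : ℝ) (f : Λ → ℝ) : ℝ :=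
  sInf {r : ℝ | ∃ g : Λ → ℝ, (∀ l, g l = 0 ∨ g l = f l) ∧
    r = (N₀ g ^ ξ + t ^ ξ * N₁ (fun l => f l - g l) ^ ξ) ^ (1 / ξ)}

/-- For quasi-norms on sequences over a countable index set that are monotone in the
absolute values of the entries and absolutely homogeneous, the cuboid and the vertex
`K_ξ` functionals satisfy `K_ξ^𝔠 ≤ K_ξ^V ≤ 2 K_ξ^𝔠`. -/
theorem stmt17 {Λ : Type*} [Countable Λ] (N₀ N₁ : (Λ → ℝ) → ℝ)
    (hN₀nonneg : ∀ a, 0 ≤ N₀ a) (hN₁nonneg : ∀ a, 0 ≤ N₁ a)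
    (hN₀mono : ∀ a b : Λ → ℝ, (∀ l, |a l| ≤ |b l|) → N₀ a ≤ N₀ b)
    (hN₁mono : ∀ a b : Λ → ℝ, (∀ l, |a l| ≤ |b l|) → N₁ a ≤ N₁ b)
    (hN₀hom : ∀ (c : ℝ) (a : Λ → ℝ), N₀ (fun l => c * a l) = |c| * N₀ a)
    (hN₁hom : ∀ (c : ℝ) (a : Λ → ℝ), N₁ (fun l => c * a l) = |c| * N₁ a)
    (ξ : ℝ) (hξ : 0 < ξ) (f : Λ → ℝ) (hf : ∀ l, 0 ≤ f l) (t : ℝ) (ht : 0 < t) :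
    Kcub N₀ N₁ ξ t f ≤ Kvert N₀ N₁ ξ t f ∧
    Kvert N₀ N₁ ξ t f ≤ 2 * Kcub N₀ N₁ ξ t f := by
  unfold Kcub Kvert
  set Sc := {r : ℝ | ∃ g : Λ → ℝ, (∀ l, 0 ≤ g l ∧ g l ≤ f l) ∧
    r = (N₀ g ^ ξ + t ^ ξ * N₁ (fun l => f l - g l) ^ ξ) ^ (1 / ξ)} with hSc
  set Sv := {r : ℝ | ∃ g : Λ → ℝ, (∀ l, g l = 0 ∨ g l = f l) ∧
    r = (N₀ g ^ ξ + t ^ ξ * N₁ (fun l => f l - g l) ^ ξ) ^ (1 / ξ)} with hSv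
  have hval_nonneg : ∀ g : Λ → ℝ,
      0 ≤ (N₀ g ^ ξ + t ^ ξ * N₁ (fun l => f l - g l) ^ ξ) ^ (1 / ξ) := by
    intro g
    apply Real.rpow_nonneg
    have h1 : 0 ≤ N₀ g ^ ξ := Real.rpow_nonneg (hN₀nonneg g) ξ
    have h2 : 0 ≤ t ^ ξ * N₁ (fun l => f l - g l) ^ ξ :=
      mul_nonneg (Real.rpow_nonneg ht.le ξ) (Real.rpow_nonneg (hN₁nonneg _) ξ)
    linarith
  have hScbdd : BddBelow Sc := ⟨0, by rintro r ⟨g, _, rfl⟩; exact hval_nonneg g⟩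
  have hSvbdd : BddBelow Sv := ⟨0, by rintro r ⟨g, _, rfl⟩; exact hval_nonneg g⟩
  have hSvne : Sv.Nonempty := ⟨_, fun _ => 0, fun l => Or.inl rfl, rfl⟩
  have hScne : Sc.Nonempty := ⟨_, fun _ => 0, fun l => ⟨le_refl _, hf l⟩, rfl⟩
  have hsub : Sv ⊆ Sc := by
    rintro r ⟨g, hg, rfl⟩
    refine ⟨g, fun l => ?_, rfl⟩
    rcases hg l with h | h
    · exact ⟨h.ge, h.le.trans (hf l)⟩
    · exact ⟨h ▸ hf l, h.le⟩
  constructor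
  · exact csInf_le_csInf hScbdd hSvne hsub
  · -- Kvert ≤ 2 * Kcub : show Kvert/2 is a lower bound of Sc
    rw [show (2 : ℝ) * sInf Sc = sInf Sc * 2 by ring, ← div_le_iff₀ (by norm_num : (0:ℝ) < 2)]
    apply le_csInf hScne
    rintro r ⟨g, hg, rfl⟩
    rw [div_le_iff₀ (by norm_num : (0:ℝ) < 2)]
    -- rounded competitor
    set g' : Λ → ℝ := fun l => if g l ≤ f l / 2 then 0 else f l with hg'
    have hmem : (N₀ g' ^ ξ + t ^ ξ * N₁ (fun l => f l - g' l) ^ ξ) ^ (1 / ξ) ∈ Sv := by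
      refine ⟨g', fun l => ?_, rfl⟩
      by_cases h : g l ≤ f l / 2 <;> simp [hg', h]
    refine (csInf_le hSvbdd hmem).trans ?_
    -- pointwise bounds
    have h0 : N₀ g' ≤ 2 * N₀ g := by
      have := hN₀mono g' (fun l => 2 * g l) (fun l => ?_)
      · rwa [hN₀hom 2 g, abs_of_nonneg (by norm_num : (0:ℝ) ≤ 2)] at this
      · by_cases h : g l ≤ f l / 2
        · simp [hg', h, abs_nonneg]
        · push_neg at h
          have h1 : 0 ≤ g l := ((hg l).1)
          have h2 : g l ≤ f l := (hg l).2
          show |if g l ≤ f l / 2 then 0 else f l| ≤ |2 * g l|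
          rw [if_neg (not_le.mpr h), abs_of_nonneg (hf l),
            abs_of_nonneg (by linarith : (0:ℝ) ≤ 2 * g l)]
          linarith
    have h1 : N₁ (fun l => f l - g' l) ≤ 2 * N₁ (fun l => f l - g l) := by
      have := hN₁mono (fun l => f l - g' l) (fun l => 2 * (f l - g l)) (fun l => ?_)
      · have heq : (fun l => 2 * (f l - g l)) = fun l => 2 * ((fun l => f l - g l) l) := rfl
        rwa [heq, hN₁hom 2 _, abs_of_nonneg (by norm_num : (0:ℝ) ≤ 2)] at this
      · have h2 : g l ≤ f l := (hg l).2
        by_cases h : g l ≤ f l / 2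
        · simp only [hg', if_pos h, sub_zero]
          rw [abs_of_nonneg (hf l), abs_of_nonneg (by linarith : (0:ℝ) ≤ 2 * (f l - g l))]
          linarith
        · simp only [hg', if_neg h, sub_self, abs_zero]
          exact abs_nonneg _
    -- combine
    have hNa : 0 ≤ N₀ g' := hN₀nonneg _
    have hNb : 0 ≤ N₁ (fun l => f l - g' l) := hN₁nonneg _
    have hr0 : N₀ g' ^ ξ ≤ (2 * N₀ g) ^ ξ := Real.rpow_le_rpow hNa h0 hξ.le
    have hr1 : N₁ (fun l => f l - g' l) ^ ξ ≤ (2 * N₁ (fun l => f l - g l)) ^ ξ :=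
      Real.rpow_le_rpow hNb h1 hξ.le
    have hmul0 : (2 * N₀ g) ^ ξ = 2 ^ ξ * N₀ g ^ ξ :=
      Real.mul_rpow (by norm_num) (hN₀nonneg g)
    have hmul1 : (2 * N₁ (fun l => f l - g l)) ^ ξ = 2 ^ ξ * N₁ (fun l => f l - g l) ^ ξ :=
      Real.mul_rpow (by norm_num) (hN₁nonneg _)
    have htξ : 0 ≤ t ^ ξ := Real.rpow_nonneg ht.le ξ
    have hsum : N₀ g' ^ ξ + t ^ ξ * N₁ (fun l => f l - g' l) ^ ξ ≤
        2 ^ ξ * (N₀ g ^ ξ + t ^ ξ * N₁ (fun l => f l - g l) ^ ξ) := by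
      rw [hmul0] at hr0; rw [hmul1] at hr1
      nlinarith [mul_le_mul_of_nonneg_left hr1 htξ]
    have hinner : 0 ≤ N₀ g' ^ ξ + t ^ ξ * N₁ (fun l => f l - g' l) ^ ξ := by
      have := Real.rpow_nonneg hNa ξ
      have := mul_nonneg htξ (Real.rpow_nonneg hNb ξ)
      linarith
    calc (N₀ g' ^ ξ + t ^ ξ * N₁ (fun l => f l - g' l) ^ ξ) ^ (1 / ξ)
        ≤ (2 ^ ξ * (N₀ g ^ ξ + t ^ ξ * N₁ (fun l => f l - g l) ^ ξ)) ^ (1 / ξ) :=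
          Real.rpow_le_rpow hinner hsum (by positivity)
      _ = 2 * (N₀ g ^ ξ + t ^ ξ * N₁ (fun l => f l - g l) ^ ξ) ^ (1 / ξ) := by
          rw [Real.mul_rpow (Real.rpow_nonneg (by norm_num) ξ) (by
            have h0' : 0 ≤ N₀ g ^ ξ := Real.rpow_nonneg (hN₀nonneg g) ξ
            have h1' : 0 ≤ t ^ ξ * N₁ (fun l => f l - g l) ^ ξ :=
              mul_nonneg htξ (Real.rpow_nonneg (hN₁nonneg _) ξ)
            linarith)]
          rw [← Real.rpow_mul (by norm_num : (0:ℝ) ≤ 2), mul_one_div,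
            div_self hξ.ne', Real.rpow_one]
      _ = (N₀ g ^ ξ + t ^ ξ * N₁ (fun l => f l - g l) ^ ξ) ^ (1 / ξ) * 2 := by ring
end

section
/- Let Λ be a countable index set and X₀, X₁ quasi-normed sequence spaces over Λ. Define the partition K-functional K_∞(t, f, A₀, A₁) = inf over partitions Λ = Λ₀ ⊔ Λ₁ of max(‖f·1_{Λ₀}‖_{A₀}, t‖f·1_{Λ₁}‖_{A₁}). Let q₀, q₁ > 0 and define power spaces ‖f‖_{X₀} = ‖f‖_{A₀}^{q₀}, ‖f‖_{X₁} = ‖f‖_{A₁}^{q₁}. If 0 < q₁ < q₀ < ∞ and s = t^{q₁} K_∞(t, f, A₀, A₁)^{q₀−q₁}, then K_∞(s, f, X₀, X₁) = K_∞(t, f, A₀, A₁)^{q₀}. -/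
open Set

/-- The partition `K_∞` functional: infimum over partitions `Λ = Λ₀ ⊔ Λ₁` of
`max(‖f·1_{Λ₀}‖_{A₀}, t‖f·1_{Λ₁}‖_{A₁})`. -/
noncomputable def KinfP {Λ : Type*} (N₀ N₁ : (Λ → ℝ) → ℝ) (t : ℝ) (f : Λ → ℝ) : ℝ :=
  sInf {r : ℝ | ∃ S : Set Λ,
    r = max (N₀ (S.indicator f)) (t * N₁ (Sᶜ.indicator f))}

/-- For `0 < q₁ < q₀ < ∞` and `s = t^{q₁}·K_∞(t,f,A₀,A₁)^{q₀-q₁}`, the partition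
`K_∞` functional of the power couple `(‖·‖_{A₀}^{q₀}, ‖·‖_{A₁}^{q₁})` satisfies
`K_∞(s, f, X₀, X₁) = K_∞(t, f, A₀, A₁)^{q₀}`. -/
theorem stmt18 {Λ : Type*} [Countable Λ] (N₀ N₁ : (Λ → ℝ) → ℝ)
    (hN₀nonneg : ∀ a, 0 ≤ N₀ a) (hN₁nonneg : ∀ a, 0 ≤ N₁ a)
    (q₀ q₁ : ℝ) (hq₁ : 0 < q₁) (hq : q₁ < q₀)
    (f : Λ → ℝ) (t s : ℝ) (ht : 0 < t)
    (hs : s = t ^ q₁ * KinfP N₀ N₁ t f ^ (q₀ - q₁)) :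
    KinfP (fun g => N₀ g ^ q₀) (fun g => N₁ g ^ q₁) s f = KinfP N₀ N₁ t f ^ q₀ := by
  have hq₀ : 0 < q₀ := hq₁.trans hq
  set K : ℝ := KinfP N₀ N₁ t f with hKdef
  set A : Set ℝ := {r : ℝ | ∃ S : Set Λ,
    r = max (N₀ (S.indicator f)) (t * N₁ (Sᶜ.indicator f))} with hAdef
  set B : Set ℝ := {r : ℝ | ∃ S : Set Λ,
    r = max (N₀ (S.indicator f) ^ q₀) (s * N₁ (Sᶜ.indicator f) ^ q₁)} with hBdef
  have hA_ne : A.Nonempty := ⟨_, ∅, rfl⟩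
  have hB_ne : B.Nonempty := ⟨_, ∅, rfl⟩
  have hA_bdd : BddBelow A := by
    refine ⟨0, fun r hr => ?_⟩
    obtain ⟨S, rfl⟩ := hr
    exact le_trans (hN₀nonneg _) (le_max_left _ _)
  have hB_bdd : BddBelow B := by
    refine ⟨0, fun r hr => ?_⟩
    obtain ⟨S, rfl⟩ := hr
    exact le_trans (Real.rpow_nonneg (hN₀nonneg _) _) (le_max_left _ _)
  have hKA : K = sInf A := rfl
  have hK0 : 0 ≤ K := by
    rw [hKA]
    refine le_csInf hA_ne fun r hr => ?_
    obtain ⟨S, rfl⟩ := hr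
    exact le_trans (hN₀nonneg _) (le_max_left _ _)
  have hgoal : KinfP (fun g => N₀ g ^ q₀) (fun g => N₁ g ^ q₁) s f = sInf B := rfl
  rw [hgoal]
  apply le_antisymm
  · -- sInf B ≤ K ^ q₀
    apply le_of_forall_pos_le_add
    intro ε hε
    set c : ℝ := K ^ q₀ + ε with hc
    have hc0 : 0 ≤ c := by positivity
    have hcgt : K ^ q₀ < c := by simp [hc, hε]
    set c' : ℝ := c ^ q₀⁻¹ with hc'
    have hc'0 : 0 ≤ c' := Real.rpow_nonneg hc0 _
    have hc'pow : c' ^ q₀ = c := Real.rpow_inv_rpow hc0 hq₀.ne'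
    have hKc' : K < c' := by
      by_contra h
      push_neg at h
      have := Real.rpow_le_rpow hc'0 h hq₀.le
      rw [hc'pow] at this
      linarith
    have hexists : ∃ a ∈ A, a < c' := by
      rw [hKA] at hKc'
      exact exists_lt_of_csInf_lt hA_ne hKc'
    obtain ⟨a, ⟨S, rfl⟩, ha⟩ := hexists
    have h0 : N₀ (S.indicator f) < c' := lt_of_le_of_lt (le_max_left _ _) ha
    have h1 : t * N₁ (Sᶜ.indicator f) < c' := lt_of_le_of_lt (le_max_right _ _) ha
    have hmem : max (N₀ (S.indicator f) ^ q₀) (s * N₁ (Sᶜ.indicator f) ^ q₁) ∈ B := ⟨S, rfl⟩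
    refine le_trans (csInf_le hB_bdd hmem) ?_
    apply max_le
    · rw [← hc'pow]
      exact Real.rpow_le_rpow (hN₀nonneg _) h0.le hq₀.le
    · have heq : s * N₁ (Sᶜ.indicator f) ^ q₁ = (t * N₁ (Sᶜ.indicator f)) ^ q₁ * K ^ (q₀ - q₁) := by
        rw [hs, Real.mul_rpow ht.le (hN₁nonneg _)]
        ring
      rw [heq]
      have hb1 : (t * N₁ (Sᶜ.indicator f)) ^ q₁ ≤ c' ^ q₁ :=
        Real.rpow_le_rpow (mul_nonneg ht.le (hN₁nonneg _)) h1.le hq₁.le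
      have hb2 : K ^ (q₀ - q₁) ≤ c' ^ (q₀ - q₁) :=
        Real.rpow_le_rpow hK0 hKc'.le (by linarith)
      calc (t * N₁ (Sᶜ.indicator f)) ^ q₁ * K ^ (q₀ - q₁)
          ≤ c' ^ q₁ * c' ^ (q₀ - q₁) := by
            apply mul_le_mul hb1 hb2 (Real.rpow_nonneg hK0 _) (Real.rpow_nonneg hc'0 _)
        _ = c' ^ q₀ := by
            rw [← Real.rpow_add' hc'0 (by simp [hq₀.ne'])]
            ring_nf
        _ = c := hc'pow
  · -- K ^ q₀ ≤ sInf B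
    refine le_csInf hB_ne fun r hr => ?_
    obtain ⟨S, rfl⟩ := hr
    have hmemA : max (N₀ (S.indicator f)) (t * N₁ (Sᶜ.indicator f)) ∈ A := ⟨S, rfl⟩
    have hge : K ≤ max (N₀ (S.indicator f)) (t * N₁ (Sᶜ.indicator f)) := by
      rw [hKA]; exact csInf_le hA_bdd hmemA
    rcases le_max_iff.mp hge with h | h
    · exact le_trans (Real.rpow_le_rpow hK0 h hq₀.le) (le_max_left _ _)
    · refine le_trans ?_ (le_max_right _ _)
      have heq : s * N₁ (Sᶜ.indicator f) ^ q₁ = (t * N₁ (Sᶜ.indicator f)) ^ q₁ * K ^ (q₀ - q₁) := by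
        rw [hs, Real.mul_rpow ht.le (hN₁nonneg _)]
        ring
      rw [heq]
      have hb1 : K ^ q₁ ≤ (t * N₁ (Sᶜ.indicator f)) ^ q₁ :=
        Real.rpow_le_rpow hK0 h hq₁.le
      calc K ^ q₀ = K ^ q₁ * K ^ (q₀ - q₁) := by
            rw [← Real.rpow_add' hK0 (by simp [hq₀.ne'])]
            ring_nf
        _ ≤ (t * N₁ (Sᶜ.indicator f)) ^ q₁ * K ^ (q₀ - q₁) :=
            mul_le_mul_of_nonneg_right hb1 (Real.rpow_nonneg hK0 _)
end
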